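/- arXiv:2312.13426 — 5 statements merged into one kernel-verified Lean document; each statement's English description precedes it below -/
import Mathlib

section
/- Define the Kreiss constant of a bounded operator A with spectrum in the closed unit disk by η(A) = sup_{|z|>1} (|z| − 1)·‖(A − zI)^{-1}‖, and the distance to instability d(A) = inf_{|z|≥1} ‖(A − zI)^{-1}‖^{-1}. If Δ is a bounded operator with ‖Δ‖ < d(A), then η(A + Δ) ≤ η(A) / (1 − ‖Δ‖/d(A)) and η(A + Δ) ≥ η(A) / (1 + ‖Δ‖/d(A)). -/
open Ring

/-- Perturbation of a unit: invertibility and norm bound. -/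
lemma aux_pert {R : Type*} [NormedRing R] [NormOneClass R] [CompleteSpace R] (T D : R) (hT : IsUnit T)
    (h : ‖D‖ * ‖Ring.inverse T‖ < 1) :
    IsUnit (T + D) ∧
      ‖Ring.inverse (T + D)‖ ≤ ‖Ring.inverse T‖ / (1 - ‖D‖ * ‖Ring.inverse T‖) := by
  have hR0 : Ring.inverse T = (↑hT.unit⁻¹ : R) := by
    rw [← Ring.inverse_unit hT.unit, hT.unit_spec]
  have hs : ‖-(Ring.inverse T * D)‖ < 1 := by
    rw [norm_neg]
    calc ‖Ring.inverse T * D‖ ≤ ‖Ring.inverse T‖ * ‖D‖ := norm_mul_le _ _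
      _ = ‖D‖ * ‖Ring.inverse T‖ := mul_comm _ _
      _ < 1 := h
  set u := hT.unit * Units.oneSub (-(Ring.inverse T * D)) hs with hu
  have huval : (u : R) = T + D := by
    rw [hu, Units.val_mul, Units.val_oneSub, sub_neg_eq_add, hT.unit_spec, mul_add, mul_one,
      ← mul_assoc, Ring.mul_inverse_cancel _ hT, one_mul]
  have hinv : Ring.inverse (T + D) = (↑u⁻¹ : R) := by
    rw [← huval, Ring.inverse_unit]
  refine ⟨huval ▸ u.isUnit, ?_⟩
  have hone : (↑(Units.oneSub (-(Ring.inverse T * D)) hs)⁻¹ : R)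
      = Ring.inverse (1 - -(Ring.inverse T * D)) := by
    rw [NormedRing.inverse_one_sub _ hs]
  have hgeom : ‖Ring.inverse (1 - -(Ring.inverse T * D))‖ ≤ (1 - ‖-(Ring.inverse T * D)‖)⁻¹ := by
    rw [← geom_series_eq_inverse _ hs]
    simpa using tsum_geometric_le_of_norm_lt_one _ hs
  have hns : ‖-(Ring.inverse T * D)‖ ≤ ‖D‖ * ‖Ring.inverse T‖ := by
    rw [norm_neg]
    calc ‖Ring.inverse T * D‖ ≤ ‖Ring.inverse T‖ * ‖D‖ := norm_mul_le _ _
      _ = ‖D‖ * ‖Ring.inverse T‖ := mul_comm _ _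
  have h1 : 0 < 1 - ‖D‖ * ‖Ring.inverse T‖ := by linarith
  have h2 : 0 < 1 - ‖-(Ring.inverse T * D)‖ := by linarith
  calc ‖Ring.inverse (T + D)‖
      = ‖(↑(Units.oneSub (-(Ring.inverse T * D)) hs)⁻¹ : R) * (↑hT.unit⁻¹ : R)‖ := by
        rw [hinv, hu, mul_inv_rev, Units.val_mul]
    _ ≤ ‖(↑(Units.oneSub (-(Ring.inverse T * D)) hs)⁻¹ : R)‖ * ‖(↑hT.unit⁻¹ : R)‖ :=
        norm_mul_le _ _
    _ ≤ (1 - ‖-(Ring.inverse T * D)‖)⁻¹ * ‖Ring.inverse T‖ := by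
        rw [← hR0]
        exact mul_le_mul_of_nonneg_right (hone ▸ hgeom) (norm_nonneg _)
    _ ≤ (1 - ‖D‖ * ‖Ring.inverse T‖)⁻¹ * ‖Ring.inverse T‖ := by
        gcongr
    _ = ‖Ring.inverse T‖ / (1 - ‖D‖ * ‖Ring.inverse T‖) := by
        rw [div_eq_mul_inv, mul_comm]

lemma aux_lower {R : Type*} [NormedRing R] (T S : R) (hT : IsUnit T) (hS : IsUnit S) :
    ‖Ring.inverse T‖ ≤ ‖Ring.inverse S‖ * (1 + ‖S - T‖ * ‖Ring.inverse T‖) := by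
  have key : Ring.inverse T = Ring.inverse S + Ring.inverse S * ((S - T) * Ring.inverse T) := by
    have h1 : Ring.inverse S * S = 1 := Ring.inverse_mul_cancel _ hS
    have h2 : T * Ring.inverse T = 1 := Ring.mul_inverse_cancel _ hT
    calc Ring.inverse T = (Ring.inverse S * S) * Ring.inverse T := by rw [h1, one_mul]
      _ = Ring.inverse S * (T + (S - T)) * Ring.inverse T := by rw [add_sub_cancel]
      _ = Ring.inverse S * (T * Ring.inverse T) + Ring.inverse S * ((S - T) * Ring.inverse T) := by
          rw [mul_add, add_mul, mul_assoc, mul_assoc]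
      _ = Ring.inverse S + Ring.inverse S * ((S - T) * Ring.inverse T) := by rw [h2, mul_one]
  have hb : ‖Ring.inverse S * ((S - T) * Ring.inverse T)‖
      ≤ ‖Ring.inverse S‖ * (‖S - T‖ * ‖Ring.inverse T‖) := by
    calc ‖Ring.inverse S * ((S - T) * Ring.inverse T)‖
        ≤ ‖Ring.inverse S‖ * ‖(S - T) * Ring.inverse T‖ := norm_mul_le _ _
      _ ≤ ‖Ring.inverse S‖ * (‖S - T‖ * ‖Ring.inverse T‖) :=
          mul_le_mul_of_nonneg_left (norm_mul_le _ _) (norm_nonneg _)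
  calc ‖Ring.inverse T‖ = ‖Ring.inverse S + Ring.inverse S * ((S - T) * Ring.inverse T)‖ := by
        rw [← key]
    _ ≤ ‖Ring.inverse S‖ + ‖Ring.inverse S * ((S - T) * Ring.inverse T)‖ := norm_add_le _ _
    _ ≤ ‖Ring.inverse S‖ + ‖Ring.inverse S‖ * (‖S - T‖ * ‖Ring.inverse T‖) := by linarith
    _ = ‖Ring.inverse S‖ * (1 + ‖S - T‖ * ‖Ring.inverse T‖) := by ring

variable {H : Type*} [NormedAddCommGroup H] [InnerProductSpace ℂ H] [CompleteSpace H]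

/-- The Kreiss constant of a bounded operator. -/
noncomputable def kreiss (A : H →L[ℂ] H) : ℝ :=
  ⨆ z : {z : ℂ // 1 < ‖z‖}, (‖z.1‖ - 1) * ‖Ring.inverse (A - z.1 • (1 : H →L[ℂ] H))‖

/-- The distance to instability of a bounded operator. -/
noncomputable def distInst (A : H →L[ℂ] H) : ℝ :=
  ⨅ z : {z : ℂ // 1 ≤ ‖z‖}, ‖Ring.inverse (A - z.1 • (1 : H →L[ℂ] H))‖⁻¹

theorem kreiss_perturbation (A Δ : H →L[ℂ] H)
    (hρ : spectralRadius ℂ A < 1)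
    (hΔ : ‖Δ‖ < distInst A) :
    kreiss (A + Δ) ≤ kreiss A / (1 - ‖Δ‖ / distInst A) ∧
      kreiss A / (1 + ‖Δ‖ / distInst A) ≤ kreiss (A + Δ) := by
  haveI : Nonempty {z : ℂ // 1 < ‖z‖} := ⟨⟨2, by norm_num⟩⟩
  haveI : Nonempty {z : ℂ // 1 ≤ ‖z‖} := ⟨⟨1, by norm_num⟩⟩
  rcases subsingleton_or_nontrivial H with hH | hH
  · exfalso
    have h0 : distInst A = 0 := by
      have hz : ∀ z : {z : ℂ // 1 ≤ ‖z‖},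
          ‖Ring.inverse (A - z.1 • (1 : H →L[ℂ] H))‖⁻¹ = 0 := by
        intro z
        have : Ring.inverse (A - z.1 • (1 : H →L[ℂ] H)) = 0 := Subsingleton.elim _ _
        rw [this, norm_zero, inv_zero]
      have hdd : distInst A = ⨅ z : {z : ℂ // 1 ≤ ‖z‖},
          ‖Ring.inverse (A - z.1 • (1 : H →L[ℂ] H))‖⁻¹ := rfl
      rw [hdd]
      simp only [hz]
      exact ciInf_const
    rw [h0] at hΔ
    exact absurd hΔ (not_lt.mpr (norm_nonneg _))
  · set d := distInst A with hdd
    have hd : 0 < d := lt_of_le_of_lt (norm_nonneg Δ) hΔ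
    have hcinv : ∀ z : ℂ, 1 ≤ ‖z‖ → IsUnit (A - z • (1 : H →L[ℂ] H)) := by
      intro z hz
      have h1 : spectralRadius ℂ A < ‖z‖₊ := by
        refine lt_of_lt_of_le hρ ?_
        rw [show (1 : ENNReal) = ((1 : NNReal) : ENNReal) from rfl, ENNReal.coe_le_coe,
          ← NNReal.coe_le_coe]
        simpa using hz
      have h2 := spectrum.mem_resolventSet_of_spectralRadius_lt h1
      rw [resolventSet, Set.mem_setOf_eq] at h2
      have h3 : A - z • (1 : H →L[ℂ] H) = -(algebraMap ℂ (H →L[ℂ] H) z - A) := by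
        rw [Algebra.algebraMap_eq_smul_one, neg_sub]
      rw [h3]
      exact h2.neg
    have hRle : ∀ z : ℂ, 1 ≤ ‖z‖ →
        ‖Ring.inverse (A - z • (1 : H →L[ℂ] H))‖ ≤ d⁻¹ := by
      intro z hz
      have hb : BddBelow (Set.range fun z : {z : ℂ // 1 ≤ ‖z‖} =>
          ‖Ring.inverse (A - z.1 • (1 : H →L[ℂ] H))‖⁻¹) := by
        refine ⟨0, ?_⟩
        rintro x ⟨w, rfl⟩
        positivity
      have h1 : d ≤ ‖Ring.inverse (A - z • (1 : H →L[ℂ] H))‖⁻¹ := ciInf_le hb ⟨z, hz⟩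
      have h2 := inv_anti₀ hd h1
      rwa [inv_inv] at h2
    have hkey : ∀ z : ℂ, 1 ≤ ‖z‖ →
        ‖Δ‖ * ‖Ring.inverse (A - z • (1 : H →L[ℂ] H))‖ ≤ ‖Δ‖ / d := by
      intro z hz
      rw [div_eq_mul_inv]
      exact mul_le_mul_of_nonneg_left (hRle z hz) (norm_nonneg _)
    have hc1 : ‖Δ‖ / d < 1 := (div_lt_one hd).mpr hΔ
    have hc0 : (0:ℝ) ≤ ‖Δ‖ / d := by positivity
    have h1c : (0:ℝ) < 1 - ‖Δ‖ / d := by linarith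
    have hsmall : ∀ z : ℂ, 1 ≤ ‖z‖ →
        ‖Δ‖ * ‖Ring.inverse (A - z • (1 : H →L[ℂ] H))‖ < 1 :=
      fun z hz => lt_of_le_of_lt (hkey z hz) hc1
    set M : ℝ := (‖A‖ + 1) * (1 + d⁻¹) with hM
    have hbA : ∀ z : ℂ, 1 < ‖z‖ →
        (‖z‖ - 1) * ‖Ring.inverse (A - z • (1 : H →L[ℂ] H))‖ ≤ M := by
      intro z hz
      have hR := hRle z hz.le
      have hRn : (0:ℝ) ≤ ‖Ring.inverse (A - z • (1 : H →L[ℂ] H))‖ := norm_nonneg _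
      have hdi : (0:ℝ) ≤ d⁻¹ := by positivity
      have hAn : (0:ℝ) ≤ ‖A‖ := norm_nonneg _
      rcases le_or_gt ‖z‖ (‖A‖ + 1) with hle | hgt
      · nlinarith
      · have hmul : (A - z • (1 : H →L[ℂ] H)) * Ring.inverse (A - z • (1 : H →L[ℂ] H)) = 1 :=
          Ring.mul_inverse_cancel _ (hcinv z hz.le)
        have hzR : z • Ring.inverse (A - z • (1 : H →L[ℂ] H))
            = A * Ring.inverse (A - z • (1 : H →L[ℂ] H)) - 1 := by
          rw [sub_mul, smul_mul_assoc, one_mul, sub_eq_iff_eq_add] at hmul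
          rw [hmul]
          abel
        have hnorm : ‖z‖ * ‖Ring.inverse (A - z • (1 : H →L[ℂ] H))‖
            ≤ ‖A‖ * ‖Ring.inverse (A - z • (1 : H →L[ℂ] H))‖ + 1 := by
          calc ‖z‖ * ‖Ring.inverse (A - z • (1 : H →L[ℂ] H))‖
              = ‖z • Ring.inverse (A - z • (1 : H →L[ℂ] H))‖ := (norm_smul z _).symm
            _ = ‖A * Ring.inverse (A - z • (1 : H →L[ℂ] H)) - 1‖ := by rw [hzR]
            _ ≤ ‖A * Ring.inverse (A - z • (1 : H →L[ℂ] H))‖ + ‖(1 : H →L[ℂ] H)‖ :=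
                norm_sub_le _ _
            _ ≤ ‖A‖ * ‖Ring.inverse (A - z • (1 : H →L[ℂ] H))‖ + 1 := by
                have h4 := norm_mul_le A (Ring.inverse (A - z • (1 : H →L[ℂ] H)))
                have h5 : ‖(1 : H →L[ℂ] H)‖ = 1 := norm_one
                linarith
        nlinarith [mul_le_mul_of_nonneg_left hR hAn]
    have hBddA : BddAbove (Set.range fun z : {z : ℂ // 1 < ‖z‖} =>
        (‖z.1‖ - 1) * ‖Ring.inverse (A - z.1 • (1 : H →L[ℂ] H))‖) := by
      refine ⟨M, ?_⟩
      rintro x ⟨w, rfl⟩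
      exact hbA w.1 w.2
    have hterm : ∀ z : ℂ, 1 < ‖z‖ →
        (‖z‖ - 1) * ‖Ring.inverse (A + Δ - z • (1 : H →L[ℂ] H))‖ ≤
          ((‖z‖ - 1) * ‖Ring.inverse (A - z • (1 : H →L[ℂ] H))‖) / (1 - ‖Δ‖ / d) := by
      intro z hz
      obtain ⟨hu, hb⟩ := aux_pert (A - z • (1 : H →L[ℂ] H)) Δ (hcinv z hz.le) (hsmall z hz.le)
      rw [show A + Δ - z • (1 : H →L[ℂ] H) = (A - z • (1 : H →L[ℂ] H)) + Δ by abel]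
      have h2 : 1 - ‖Δ‖ / d ≤ 1 - ‖Δ‖ * ‖Ring.inverse (A - z • (1 : H →L[ℂ] H))‖ := by
        have := hkey z hz.le; linarith
      calc (‖z‖ - 1) * ‖Ring.inverse ((A - z • (1 : H →L[ℂ] H)) + Δ)‖
          ≤ (‖z‖ - 1) * (‖Ring.inverse (A - z • (1 : H →L[ℂ] H))‖ /
              (1 - ‖Δ‖ * ‖Ring.inverse (A - z • (1 : H →L[ℂ] H))‖)) :=
            mul_le_mul_of_nonneg_left hb (by linarith)
        _ ≤ (‖z‖ - 1) * (‖Ring.inverse (A - z • (1 : H →L[ℂ] H))‖ / (1 - ‖Δ‖ / d)) :=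
            mul_le_mul_of_nonneg_left
              (div_le_div_of_nonneg_left (norm_nonneg _) h1c h2) (by linarith)
        _ = ((‖z‖ - 1) * ‖Ring.inverse (A - z • (1 : H →L[ℂ] H))‖) / (1 - ‖Δ‖ / d) := by
            ring
    have hkA : kreiss A = ⨆ z : {z : ℂ // 1 < ‖z‖},
        (‖z.1‖ - 1) * ‖Ring.inverse (A - z.1 • (1 : H →L[ℂ] H))‖ := rfl
    have hkS : kreiss (A + Δ) = ⨆ z : {z : ℂ // 1 < ‖z‖},
        (‖z.1‖ - 1) * ‖Ring.inverse (A + Δ - z.1 • (1 : H →L[ℂ] H))‖ := rfl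
    constructor
    · rw [hkS, hkA]
      refine ciSup_le fun z => ?_
      refine le_trans (hterm z.1 z.2) ?_
      apply div_le_div_of_nonneg_right _ h1c.le
      exact le_ciSup hBddA z
    · have hBddS : BddAbove (Set.range fun z : {z : ℂ // 1 < ‖z‖} =>
          (‖z.1‖ - 1) * ‖Ring.inverse (A + Δ - z.1 • (1 : H →L[ℂ] H))‖) := by
        refine ⟨M / (1 - ‖Δ‖ / d), ?_⟩
        rintro x ⟨w, rfl⟩
        exact le_trans (hterm w.1 w.2) (div_le_div_of_nonneg_right (hbA w.1 w.2) h1c.le)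
      rw [div_le_iff₀ (by positivity : (0:ℝ) < 1 + ‖Δ‖ / d), hkA]
      refine ciSup_le fun z => ?_
      have hu : IsUnit (A + Δ - z.1 • (1 : H →L[ℂ] H)) := by
        rw [show A + Δ - z.1 • (1 : H →L[ℂ] H) = (A - z.1 • (1 : H →L[ℂ] H)) + Δ by abel]
        exact (aux_pert _ Δ (hcinv z.1 z.2.le) (hsmall z.1 z.2.le)).1
      have hlow := aux_lower (A - z.1 • (1 : H →L[ℂ] H)) (A + Δ - z.1 • (1 : H →L[ℂ] H))
        (hcinv z.1 z.2.le) hu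
      rw [show (A + Δ - z.1 • (1 : H →L[ℂ] H)) - (A - z.1 • (1 : H →L[ℂ] H)) = Δ by abel]
        at hlow
      have h3 : ‖Ring.inverse (A - z.1 • (1 : H →L[ℂ] H))‖
          ≤ ‖Ring.inverse (A + Δ - z.1 • (1 : H →L[ℂ] H))‖ * (1 + ‖Δ‖ / d) := by
        refine le_trans hlow (mul_le_mul_of_nonneg_left ?_ (norm_nonneg _))
        have := hkey z.1 z.2.le
        linarith
      have hz1 : (0:ℝ) ≤ ‖z.1‖ - 1 := by linarith [z.2]
      calc (‖z.1‖ - 1) * ‖Ring.inverse (A - z.1 • (1 : H →L[ℂ] H))‖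
          ≤ (‖z.1‖ - 1) * (‖Ring.inverse (A + Δ - z.1 • (1 : H →L[ℂ] H))‖ * (1 + ‖Δ‖ / d)) :=
            mul_le_mul_of_nonneg_left h3 hz1
        _ = ((‖z.1‖ - 1) * ‖Ring.inverse (A + Δ - z.1 • (1 : H →L[ℂ] H))‖) * (1 + ‖Δ‖ / d) := by
            ring
        _ ≤ kreiss (A + Δ) * (1 + ‖Δ‖ / d) := by
            refine mul_le_mul_of_nonneg_right ?_ (by positivity)
            rw [hkS]
            exact le_ciSup hBddS z
end

section
/- Let S : H → L be a bounded injective-on-kernel-complement operator between Hilbert spaces, A : L → L a bounded operator with spectral radius ρ(A) < 1, and G : H → H a compact operator satisfying the intertwining relation A∘S = S∘G. Then ρ(G) ≤ ρ(A) < 1. -/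
/-! By the Fredholm alternative every nonzero point of the spectrum of the compact operator `G` is
an eigenvalue, and the injective `S` carries its eigenvectors to eigenvectors of `A`; so the
nonzero spectrum of `G` lies in that of `A`. -/

theorem Module.End.HasEigenvalue.of_comp_eq_comp {R M N : Type*} [CommRing R]
    [AddCommGroup M] [Module R M] [AddCommGroup N] [Module R N]
    {G : End R M} {A : End R N} {S : M →ₗ[R] N} (hS : Function.Injective S)
    (h : A ∘ₗ S = S ∘ₗ G) {μ : R} (hμ : G.HasEigenvalue μ) : A.HasEigenvalue μ := by
  obtain ⟨x, hx, hx0⟩ := hμ.exists_hasEigenvector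
  refine hasEigenvalue_of_hasEigenvector (x := S x) ⟨?_, (map_ne_zero_iff S hS).mpr hx0⟩
  rw [mem_eigenspace_iff, ← LinearMap.comp_apply, h, LinearMap.comp_apply,
    mem_eigenspace_iff.mp hx, map_smul]

theorem ContinuousLinearMap.mem_spectrum_of_hasEigenvalue {R M : Type*} [CommRing R]
    [TopologicalSpace M] [AddCommGroup M] [Module R M] [IsTopologicalAddGroup M]
    [ContinuousConstSMul R M] {f : M →L[R] M} {μ : R}
    (hμ : Module.End.HasEigenvalue (f : Module.End R M) μ) :
    μ ∈ spectrum R f :=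
  fun hunit => hμ.mem_spectrum (hunit.map ContinuousLinearMap.toLinearMapRingHom)

theorem spectralRadius_le_of_forall_ne_zero_mem {𝕜 A B : Type*} [NormedField 𝕜]
    [Ring A] [Algebra 𝕜 A] [Ring B] [Algebra 𝕜 B] {a : A} {b : B}
    (h : ∀ k ∈ spectrum 𝕜 a, k ≠ 0 → k ∈ spectrum 𝕜 b) :
    spectralRadius 𝕜 a ≤ spectralRadius 𝕜 b := by
  refine iSup₂_le fun k hk => ?_
  rcases eq_or_ne k 0 with rfl | hk0
  · simp
  · exact le_iSup₂ (f := fun k (_ : k ∈ spectrum 𝕜 b) => (‖k‖₊ : ENNReal)) k (h k hk hk0)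

theorem IsCompactOperator.spectralRadius_le_of_comp_eq_comp {𝕜 X Y : Type*}
    [NontriviallyNormedField 𝕜] [NormedAddCommGroup X] [NormedSpace 𝕜 X] [CompleteSpace X]
    [NormedAddCommGroup Y] [NormedSpace 𝕜 Y] {G : X →L[𝕜] X} {A : Y →L[𝕜] Y} {S : X →L[𝕜] Y}
    (hG : IsCompactOperator G) (hS : Function.Injective S) (h : A.comp S = S.comp G) :
    spectralRadius 𝕜 G ≤ spectralRadius 𝕜 A :=
  spectralRadius_le_of_forall_ne_zero_mem fun _k hk hk0 =>
    ContinuousLinearMap.mem_spectrum_of_hasEigenvalue <|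
      ((hG.hasEigenvalue_iff_mem_spectrum hk0).mpr hk).of_comp_eq_comp hS
        (LinearMap.ext fun x => DFunLike.congr_fun h x)

theorem spectralRadius_le_of_intertwining_general
    {H L : Type*} [NormedAddCommGroup H] [InnerProductSpace ℂ H] [CompleteSpace H]
    [NormedAddCommGroup L] [InnerProductSpace ℂ L]
    (S : H →L[ℂ] L) (A : L →L[ℂ] L) (G : H →L[ℂ] H)
    (hS : ∀ h : H, h ≠ 0 → S h ≠ 0)
    (hρA : spectralRadius ℂ A < 1)
    (hG : IsCompactOperator G)
    (hintertwine : A.comp S = S.comp G) :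
    spectralRadius ℂ G ≤ spectralRadius ℂ A ∧ spectralRadius ℂ G < 1 := by
  have hS_inj : Function.Injective S :=
    (injective_iff_map_eq_zero S).mpr fun h => not_imp_not.mp (hS h)
  have hle := hG.spectralRadius_le_of_comp_eq_comp hS_inj hintertwine
  exact ⟨hle, hle.trans_lt hρA⟩

theorem spectralRadius_le_of_intertwining
    {H L : Type*} [NormedAddCommGroup H] [InnerProductSpace ℂ H] [CompleteSpace H]
    [NormedAddCommGroup L] [InnerProductSpace ℂ L] [CompleteSpace L]
    (S : H →L[ℂ] L) (A : L →L[ℂ] L) (G : H →L[ℂ] H)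
    (hS : ∀ h : H, h ≠ 0 → S h ≠ 0)
    (hρA : spectralRadius ℂ A < 1)
    (hG : IsCompactOperator G)
    (hintertwine : A.comp S = S.comp G) :
    spectralRadius ℂ G ≤ spectralRadius ℂ A ∧ spectralRadius ℂ G < 1 :=
  spectralRadius_le_of_intertwining_general S A G hS hρA hG hintertwine
end

section
/- Let A be a bounded operator on a complex Hilbert space with ρ(A) < 1, η(A) its Kreiss constant, d(A) = inf_{|z|≥1} ‖(A − zI)^{-1}‖^{-1} > 0. Then for every bounded perturbation E with ‖A − E‖ < d(A), the operator E satisfies η(E) ≤ η(A)·d(A)/(d(A) − ‖A − E‖). -/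
variable {H : Type*} [NormedAddCommGroup H] [InnerProductSpace ℂ H] [CompleteSpace H]

lemma norm_inv_one_sub_le (t : H →L[ℂ] H) (h : ‖t‖ < 1) :
    ‖Ring.inverse ((1 : H →L[ℂ] H) - t)‖ ≤ (1 - ‖t‖)⁻¹ := by
  rw [← geom_series_eq_inverse t h]
  have h1 : ‖(1 : H →L[ℂ] H)‖ ≤ 1 := ContinuousLinearMap.norm_id_le
  have := tsum_geometric_le_of_norm_lt_one t h
  linarith

lemma isUnit_sub_smul_one (A : H →L[ℂ] H) (hρ : spectralRadius ℂ A < 1) (z : ℂ)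
    (hz : 1 ≤ ‖z‖) : IsUnit (A - z • (1 : H →L[ℂ] H)) := by
  have h1 : (1 : ENNReal) ≤ ‖z‖₊ := by
    rw [← ENNReal.coe_one, ENNReal.coe_le_coe]
    exact_mod_cast hz
  have h := spectrum.mem_resolventSet_of_spectralRadius_lt (lt_of_lt_of_le hρ h1)
  rw [resolventSet, Set.mem_setOf_eq] at h
  rw [Algebra.algebraMap_eq_smul_one] at h
  simpa using h.neg

lemma norm_resolvent_decay (A : H →L[ℂ] H) (z : ℂ) (hz : ‖A‖ < ‖z‖) :
    ‖Ring.inverse (A - z • (1 : H →L[ℂ] H))‖ ≤ (‖z‖ - ‖A‖)⁻¹ := by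
  have hz0 : z ≠ 0 := by
    intro h; rw [h, norm_zero] at hz; exact absurd hz (not_lt.2 (norm_nonneg A))
  have hzpos : 0 < ‖z‖ := lt_of_le_of_lt (norm_nonneg A) hz
  set t : H →L[ℂ] H := z⁻¹ • A with ht_def
  have hnt : ‖t‖ = ‖z‖⁻¹ * ‖A‖ := by rw [ht_def, norm_smul, norm_inv]
  have ht1 : ‖t‖ < 1 := by
    rw [hnt]
    rw [inv_mul_lt_iff₀ hzpos]; simpa using hz
  set w : (H →L[ℂ] H)ˣ := Units.oneSub t ht1 with hw_def
  have hwinv : (↑w⁻¹ : H →L[ℂ] H) = Ring.inverse ((1 : H →L[ℂ] H) - t) := by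
    rw [← NormedRing.inverse_one_sub t ht1]
  have hfact : A - z • (1 : H →L[ℂ] H) = (-z) • ((1 : H →L[ℂ] H) - t) := by
    rw [ht_def, smul_sub, smul_smul, neg_mul, mul_inv_cancel₀ hz0]
    simp [sub_eq_add_neg, add_comm]
  set U : (H →L[ℂ] H)ˣ :=
    { val := A - z • (1 : H →L[ℂ] H),
      inv := (-z)⁻¹ • (↑w⁻¹ : H →L[ℂ] H),
      val_inv := by
        rw [hfact, smul_mul_assoc, mul_smul_comm, smul_smul,
          mul_inv_cancel₀ (neg_ne_zero.2 hz0), one_smul, ← Units.val_oneSub t ht1, ← hw_def,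
          Units.mul_inv]
      inv_val := by
        rw [hfact, smul_mul_assoc, mul_smul_comm, smul_smul,
          inv_mul_cancel₀ (neg_ne_zero.2 hz0), one_smul, ← Units.val_oneSub t ht1, ← hw_def,
          Units.inv_mul] } with hU_def
  have : Ring.inverse (A - z • (1 : H →L[ℂ] H)) = (-z)⁻¹ • (↑w⁻¹ : H →L[ℂ] H) := by
    have := Ring.inverse_unit U
    rw [hU_def] at this
    exact this
  rw [this, norm_smul, norm_inv, norm_neg]
  have hb := norm_inv_one_sub_le t ht1
  rw [← hwinv] at hb
  calc ‖z‖⁻¹ * ‖(↑w⁻¹ : H →L[ℂ] H)‖ ≤ ‖z‖⁻¹ * (1 - ‖t‖)⁻¹ := by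
        apply mul_le_mul_of_nonneg_left hb (by positivity)
    _ = (‖z‖ - ‖A‖)⁻¹ := by
        rw [hnt, ← mul_inv]
        congr 1
        rw [mul_sub, mul_one, mul_inv_cancel_left₀ hzpos.ne']

lemma kreiss_bddAbove (A : H →L[ℂ] H) (hρ : spectralRadius ℂ A < 1) :
    BddAbove (Set.range fun z : {z : ℂ // 1 < ‖z‖} =>
      (‖z.1‖ - 1) * ‖Ring.inverse (A - z.1 • (1 : H →L[ℂ] H))‖) := by
  set R : ℝ := 2 * ‖A‖ + 2 with hR_def
  set K : Set ℂ := Metric.closedBall (0 : ℂ) R \ Metric.ball (0 : ℂ) 1 with hK_def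
  have hK : IsCompact K := (isCompact_closedBall (0 : ℂ) R).diff Metric.isOpen_ball
  have hcont : ContinuousOn (fun z : ℂ => Ring.inverse (A - z • (1 : H →L[ℂ] H))) K := by
    intro z hz
    have hz1 : 1 ≤ ‖z‖ := by
      have := hz.2
      rw [Metric.mem_ball, Complex.dist_eq, sub_zero] at this
      simpa using not_lt.1 this
    obtain ⟨u, hu⟩ := isUnit_sub_smul_one A hρ z hz1
    have h1 : ContinuousAt (fun z : ℂ => A - z • (1 : H →L[ℂ] H)) z := by fun_prop
    have h2 : ContinuousAt (Ring.inverse : (H →L[ℂ] H) → (H →L[ℂ] H))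
        (A - z • (1 : H →L[ℂ] H)) := by
      rw [← hu]; exact NormedRing.inverse_continuousAt u
    exact (ContinuousAt.comp (f := fun z : ℂ => A - z • (1 : H →L[ℂ] H))
      (g := Ring.inverse) h2 h1).continuousWithinAt
  obtain ⟨C, hC⟩ := hK.exists_bound_of_continuousOn hcont
  refine ⟨max ((R - 1) * max C 0) 2, ?_⟩
  rintro x ⟨⟨t, ht⟩, rfl⟩
  rcases le_or_gt ‖t‖ R with hR | hR
  · refine le_trans ?_ (le_max_left _ _)
    have htK : t ∈ K := by
      constructor
      · rw [Metric.mem_closedBall, Complex.dist_eq, sub_zero]; simpa using hR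
      · rw [Metric.mem_ball, Complex.dist_eq, sub_zero]
        simpa using not_lt.2 ht.le
    have h1 : ‖Ring.inverse (A - t • (1 : H →L[ℂ] H))‖ ≤ max C 0 :=
      le_trans (hC t htK) (le_max_left _ _)
    have hA0 := norm_nonneg A
    exact mul_le_mul (by simp only [hR_def]; linarith) h1 (norm_nonneg _) (by linarith)
  · refine le_trans ?_ (le_max_right _ _)
    have h2 : ‖A‖ < ‖t‖ := by simp only [hR_def] at hR; linarith [norm_nonneg A]
    have hb : 0 < ‖t‖ - ‖A‖ := sub_pos.2 h2
    have key : (‖t‖ - 1) * (‖t‖ - ‖A‖)⁻¹ ≤ 2 := by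
      rw [← div_eq_mul_inv, div_le_iff₀ hb]
      simp only [hR_def] at hR
      linarith
    calc (‖t‖ - 1) * ‖Ring.inverse (A - t • (1 : H →L[ℂ] H))‖
        ≤ (‖t‖ - 1) * (‖t‖ - ‖A‖)⁻¹ :=
          mul_le_mul_of_nonneg_left (norm_resolvent_decay A t h2) (by linarith)
      _ ≤ 2 := key

theorem kreiss_of_estimator_bound (A E : H →L[ℂ] H)
    (hρ : spectralRadius ℂ A < 1)
    (hd : 0 < distInst A)
    (hE : ‖A - E‖ < distInst A) :
    kreiss E ≤ kreiss A * distInst A / (distInst A - ‖A - E‖) := by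
  set d : ℝ := distInst A with hd_def
  set α : ℝ := ‖A - E‖ with hα_def
  have hα0 : 0 ≤ α := norm_nonneg _
  have hdα : 0 < d - α := sub_pos.2 hE
  set c : ℝ := d / (d - α) with hc_def
  have hc0 : 0 < c := div_pos hd hdα
  have hbdd := kreiss_bddAbove A hρ
  have hkA0 : 0 ≤ kreiss A := by
    apply Real.iSup_nonneg
    rintro ⟨t, ht⟩
    exact mul_nonneg (by linarith) (norm_nonneg _)
  rw [mul_div_assoc, ← hc_def]
  apply Real.iSup_le _ (mul_nonneg hkA0 hc0.le)
  rintro ⟨t, ht⟩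
  -- pointwise estimate
  obtain ⟨u, hu⟩ := isUnit_sub_smul_one A hρ t ht.le
  set v : H →L[ℂ] H := (↑u⁻¹ : H →L[ℂ] H) with hv_def
  have hvinv : Ring.inverse (A - t • (1 : H →L[ℂ] H)) = v := by
    rw [← hu, Ring.inverse_unit]
  have hdv : d ≤ ‖v‖⁻¹ := by
    have hbb : BddBelow (Set.range fun z : {z : ℂ // 1 ≤ ‖z‖} =>
        ‖Ring.inverse (A - z.1 • (1 : H →L[ℂ] H))‖⁻¹) := by
      refine ⟨0, ?_⟩
      rintro x ⟨w, rfl⟩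
      positivity
    have := ciInf_le hbb (⟨t, ht.le⟩ : {z : ℂ // 1 ≤ ‖z‖})
    rw [hd_def, distInst]
    simpa [hvinv] using this
  have hvd1 : ‖v‖ * d ≤ 1 := by
    rcases eq_or_lt_of_le (norm_nonneg v) with h0 | h0
    · rw [← h0, zero_mul]; norm_num
    · calc ‖v‖ * d ≤ ‖v‖ * ‖v‖⁻¹ := mul_le_mul_of_nonneg_left hdv (norm_nonneg v)
        _ = 1 := mul_inv_cancel₀ h0.ne'
  have hvα : ‖v‖ * α ≤ α / d := by
    rw [le_div_iff₀ hd]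
    nlinarith
  have hvα1 : ‖v‖ * α < 1 := lt_of_le_of_lt hvα (by rw [div_lt_one hd]; exact hE)
  set s : H →L[ℂ] H := v * (A - E) with hs_def
  have hsle : ‖s‖ ≤ ‖v‖ * α := norm_mul_le v (A - E)
  have hs1 : ‖s‖ < 1 := lt_of_le_of_lt hsle hvα1
  set w : (H →L[ℂ] H)ˣ := Units.oneSub s hs1 with hw_def
  have hwval : (↑w : H →L[ℂ] H) = 1 - s := by rw [hw_def, Units.val_oneSub]
  have hEfact : E - t • (1 : H →L[ℂ] H) = ↑(u * w) := by
    rw [Units.val_mul, hwval, mul_sub, mul_one, hs_def, hv_def, ← mul_assoc, Units.mul_inv,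
      one_mul, hu]
    abel
  have hEinv : Ring.inverse (E - t • (1 : H →L[ℂ] H)) = ↑w⁻¹ * v := by
    rw [hEfact, Ring.inverse_unit, mul_inv_rev, Units.val_mul, hv_def]
  -- norm bounds
  have hw_norm : ‖(↑w⁻¹ : H →L[ℂ] H)‖ ≤ (1 - ‖s‖)⁻¹ := by
    have hwi : (↑w⁻¹ : H →L[ℂ] H) = Ring.inverse ((1 : H →L[ℂ] H) - s) := by
      rw [hw_def, ← NormedRing.inverse_one_sub s hs1]
    rw [hwi]
    exact norm_inv_one_sub_le s hs1
  have h1s : (d - α) / d ≤ 1 - ‖s‖ := by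
    have : ‖s‖ ≤ α / d := le_trans hsle hvα
    rw [le_div_iff₀ hd] at this
    rw [div_le_iff₀ hd]
    linarith
  have hfrac : (1 - ‖s‖)⁻¹ ≤ c := by
    rw [hc_def, ← inv_div]
    exact inv_anti₀ (div_pos hdα hd) h1s
  have hkey : (‖t‖ - 1) * ‖v‖ ≤ kreiss A := by
    have := le_ciSup hbdd (⟨t, ht⟩ : {z : ℂ // 1 < ‖z‖})
    rw [kreiss]
    simpa [hvinv] using this
  calc (‖t‖ - 1) * ‖Ring.inverse (E - t • (1 : H →L[ℂ] H))‖
      ≤ (‖t‖ - 1) * ((1 - ‖s‖)⁻¹ * ‖v‖) := by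
        apply mul_le_mul_of_nonneg_left _ (by linarith)
        rw [hEinv]
        exact le_trans (norm_mul_le _ _)
          (mul_le_mul_of_nonneg_right hw_norm (norm_nonneg v))
    _ = ((‖t‖ - 1) * ‖v‖) * (1 - ‖s‖)⁻¹ := by ring
    _ ≤ kreiss A * c := by
        exact mul_le_mul hkey hfrac (inv_nonneg.2 (by linarith)) hkA0
end

section
/- Let C be a positive self-adjoint compact operator on a Hilbert space with eigenvalues σ_j² (σ_j ≥ 0) and spectral decomposition C = Σ_j σ_j² h_j⊗h_j, C_γ = C + γI for γ > 0, and let B be a bounded operator satisfying B B* ⪯ a² C^{1+α} for some a > 0 and α ∈ [1,2]. Then ‖(C_γ^{-1} − C^†) B‖² ≤ a² γ^{α−1}, where C^† is the Moore–Penrose pseudoinverse of C. -/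
/-!
On the eigenvector `h j`, with `t = σ j ^ 2`, the operator `Cγinv - Cdag` acts as multiplication
by `d = (t + γ)⁻¹ - t⁻¹`. For `y = (Cγinv - Cdag)† x` the hypothesis `B B† ≤ a² Cpow` gives
`‖B† y‖² ≤ a² ∑ j, t ^ (1 + α) d² |⟪h j, x⟫|²`, and
`t ^ (1 + α) d² = γ ^ (α - 1) · t ^ (α - 1) γ ^ (3 - α) / (t + γ)² ≤ γ ^ (α - 1)`
since `t ^ (α - 1) γ ^ (3 - α) ≤ (t + γ) ^ (α - 1) (t + γ) ^ (3 - α)`. Bessel's inequality and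
`‖(Cγinv - Cdag) B‖ = ‖B† (Cγinv - Cdag)†‖` finish the proof.
-/

open scoped InnerProductSpace

theorem Real.rpow_one_add_mul_inv_add_sub_inv_sq_le {t γ α : ℝ} (ht : 0 ≤ t) (hγ : 0 < γ)
    (hα₁ : 1 ≤ α) (hα₃ : α ≤ 3) :
    t ^ (1 + α) * ((t + γ)⁻¹ - t⁻¹) ^ 2 ≤ γ ^ (α - 1) := by
  obtain rfl | ht := ht.eq_or_lt
  · simp [Real.zero_rpow (by linarith : 1 + α ≠ 0), Real.rpow_nonneg hγ.le]
  have htγ : 0 < t + γ := by positivity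
  have hsplit {s : ℝ} (hs : 0 < s) : s ^ (α - 1) * s ^ (3 - α) = s ^ 2 := by
    rw [← Real.rpow_add hs, show α - 1 + (3 - α) = 2 by ring, Real.rpow_two]
  have hmono : t ^ (α - 1) * γ ^ (3 - α) ≤ (t + γ) ^ 2 := by
    rw [← hsplit htγ]
    gcongr <;> linarith
  have hexpand : t ^ (1 + α) * ((t + γ)⁻¹ - t⁻¹) ^ 2
      = γ ^ (α - 1) * (t ^ (α - 1) * γ ^ (3 - α) / (t + γ) ^ 2) := by
    rw [show 1 + α = α - 1 + 2 by ring, Real.rpow_add ht, Real.rpow_two]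
    field_simp
    linear_combination -hsplit hγ
  calc t ^ (1 + α) * ((t + γ)⁻¹ - t⁻¹) ^ 2
      = γ ^ (α - 1) * (t ^ (α - 1) * γ ^ (3 - α) / (t + γ) ^ 2) := hexpand
    _ ≤ γ ^ (α - 1) * 1 := by grw [div_le_one (by positivity) |>.2 hmono]
    _ = γ ^ (α - 1) := mul_one _

namespace ContinuousLinearMap

variable {𝕜 E : Type*} [RCLike 𝕜] [NormedAddCommGroup E] [InnerProductSpace 𝕜 E]

theorem apply_eq_inv_smul_of_mul_eq_one {S T : E →L[𝕜] E} (hST : S * T = 1) {c : 𝕜} (hc : c ≠ 0)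
    {v : E} (hv : T v = c • v) : S v = c⁻¹ • v := by
  calc S v = S (c⁻¹ • T v) := by rw [hv, inv_smul_smul₀ hc]
    _ = c⁻¹ • v := by rw [map_smul, ← mul_apply_eq_comp, hST, one_apply_eq_self]

theorem norm_adjoint_apply_sq_le [CompleteSpace E] {B P : E →L[𝕜] E} {c : ℝ}
    (hB : B * adjoint B ≤ (c : 𝕜) • P) (y : E) :
    ‖adjoint B y‖ ^ 2 ≤ c * RCLike.re ⟪y, P y⟫_𝕜 := by
  have hpos := hB.re_inner_nonneg_right y
  have hBB : ⟪y, (B * adjoint B) y⟫_𝕜 = (‖adjoint B y‖ ^ 2 : ℝ) := by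
    rw [mul_apply_eq_comp, ← adjoint_inner_left, inner_self_eq_norm_sq_to_K]; push_cast; rfl
  rw [sub_apply, inner_sub_right, map_sub, hBB, RCLike.ofReal_re, smul_apply, inner_smul_right,
    RCLike.re_ofReal_mul] at hpos
  linarith

theorem norm_sq_le_of_forall_norm_apply_sq_le {F : Type*} [SeminormedAddCommGroup F]
    [NormedSpace 𝕜 F] (T : E →L[𝕜] F) {c : ℝ} (hc : 0 ≤ c) (h : ∀ x, ‖T x‖ ^ 2 ≤ c * ‖x‖ ^ 2) :
    ‖T‖ ^ 2 ≤ c := by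
  have hT : ‖T‖ ≤ √c := T.opNorm_le_bound (Real.sqrt_nonneg c) fun x => by
    rw [← Real.sqrt_sq (norm_nonneg (T x)), ← Real.sqrt_sq (norm_nonneg x), ← Real.sqrt_mul hc]
    exact Real.sqrt_le_sqrt (h x)
  calc ‖T‖ ^ 2 ≤ √c ^ 2 := by gcongr
    _ = c := Real.sq_sqrt hc

end ContinuousLinearMap

namespace Orthonormal

variable {𝕜 E ι : Type*} [RCLike 𝕜] [NormedAddCommGroup E] [InnerProductSpace 𝕜 E]
  {h : ι → E}

theorem tsum_smul_inner_smul_apply (hOn : Orthonormal 𝕜 h) (c : ι → 𝕜) (j : ι) :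
    ∑' i, c i • ⟪h i, h j⟫_𝕜 • h i = c j • h j := by
  classical
  rw [tsum_eq_single j fun i hij => by simp [orthonormal_iff_ite.mp hOn i j, hij]]
  simp [hOn.1 j]

theorem hasSum_re_inner_apply_self [CompleteSpace E] (hOn : Orthonormal 𝕜 h) {μ : ι → ℝ}
    {T : E →L[𝕜] E} (hT : ∀ x, T x = ∑' i, (μ i : 𝕜) • ⟪h i, x⟫_𝕜 • h i) (y : E) :
    HasSum (fun i => μ i * ‖⟪h i, y⟫_𝕜‖ ^ 2) (RCLike.re ⟪y, T y⟫_𝕜) := by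
  classical
  set g : ι → E := fun i => (μ i : 𝕜) • ⟪h i, y⟫_𝕜 • h i
  have hproj : Summable fun i => ⟪h i, y⟫_𝕜 • h i := by
    simpa [LinearIsometry.toSpanSingleton_apply] using
      (hOn.orthogonalFamily.summable_iff_norm_sq_summable fun i => ⟪h i, y⟫_𝕜).mpr
        (by simpa using hOn.inner_products_summable y)
  -- `g` is summable: its partial sums are the images under `T` of those of `hproj`.
  have hg : HasSum g (T y) := by
    have hpartial (F : Finset ι) : T (∑ j ∈ F, ⟪h j, y⟫_𝕜 • h j) = ∑ i ∈ F, g i := by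
      have hin (i : ι) : ⟪h i, ∑ j ∈ F, ⟪h j, y⟫_𝕜 • h j⟫_𝕜 = if i ∈ F then ⟪h i, y⟫_𝕜 else 0 := by
        simp [inner_sum, inner_smul_right, orthonormal_iff_ite.mp hOn]
      rw [hT, tsum_eq_sum (s := F) fun i hi => by simp [hin, hi]]
      exact Finset.sum_congr rfl fun i hi => by simp [hin, hi, g]
    have hlim : HasSum g (T (∑' j, ⟪h j, y⟫_𝕜 • h j)) :=
      ((T.continuous.tendsto _).comp hproj.hasSum).congr hpartial
    rw [hT]
    exact hlim.summable.hasSum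
  have hinner (i : ι) : ⟪y, g i⟫_𝕜 = ((μ i * ‖⟪h i, y⟫_𝕜‖ ^ 2 : ℝ) : 𝕜) := by
    simp only [g, inner_smul_right, ← inner_conj_symm (h i) y]
    rw [RCLike.conj_mul, RCLike.norm_conj]
    push_cast
    rfl
  simpa [hinner] using RCLike.reCLM.hasSum ((innerSL 𝕜 y).hasSum hg)

theorem re_inner_adjoint_apply_le [CompleteSpace E] (hOn : Orthonormal 𝕜 h) {μ d : ι → ℝ}
    {T A : E →L[𝕜] E} (hT : ∀ x, T x = ∑' i, (μ i : 𝕜) • ⟪h i, x⟫_𝕜 • h i)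
    (hA : ∀ i, A (h i) = (d i : 𝕜) • h i) {M : ℝ} (hM₀ : 0 ≤ M) (hM : ∀ i, μ i * d i ^ 2 ≤ M)
    (x : E) :
    RCLike.re ⟪A.adjoint x, T (A.adjoint x)⟫_𝕜 ≤ M * ‖x‖ ^ 2 := by
  have hcoef (i : ι) : ‖⟪h i, A.adjoint x⟫_𝕜‖ ^ 2 = d i ^ 2 * ‖⟪h i, x⟫_𝕜‖ ^ 2 := by
    rw [ContinuousLinearMap.adjoint_inner_right, hA, inner_smul_left, RCLike.conj_ofReal,
      norm_mul, RCLike.norm_ofReal, mul_pow, sq_abs]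
  calc RCLike.re ⟪A.adjoint x, T (A.adjoint x)⟫_𝕜 ≤ M * ∑' i, ‖⟪h i, x⟫_𝕜‖ ^ 2 := by
        refine hasSum_le (fun i => ?_) (hOn.hasSum_re_inner_apply_self hT _)
          ((hOn.inner_products_summable x).hasSum.mul_left M)
        rw [hcoef, ← mul_assoc]
        gcongr
        exact hM i
    _ ≤ M * ‖x‖ ^ 2 := by gcongr; exact hOn.tsum_inner_products_le x

end Orthonormal

theorem pseudoinverse_bias_bound_general
    {H : Type*} [NormedAddCommGroup H] [InnerProductSpace ℂ H] [CompleteSpace H]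
    (h : ℕ → H) (hOn : Orthonormal ℂ h)
    (σ : ℕ → ℝ)
    (C : H →L[ℂ] H)
    (hC : ∀ x : H, C x = ∑' j : ℕ, (((σ j) ^ 2 : ℝ) : ℂ) • ⟪h j, x⟫_ℂ • h j)
    (γ : ℝ) (hγ : 0 < γ)
    (Cγinv : H →L[ℂ] H)
    (hCγ2 : Cγinv * (C + (γ : ℂ) • (1 : H →L[ℂ] H)) = 1)
    (Cdag : H →L[ℂ] H)
    (hCdag : ∀ x : H, Cdag x =
      ∑' j : ℕ, (if σ j = 0 then (0 : ℂ) else ((((σ j) ^ 2)⁻¹ : ℝ) : ℂ)) • ⟪h j, x⟫_ℂ • h j)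
    (a α : ℝ) (hα : α ∈ Set.Icc (1 : ℝ) 2)
    (Cpow : H →L[ℂ] H)
    (hCpow : ∀ x : H, Cpow x =
      ∑' j : ℕ, (((((σ j) ^ 2) ^ ((1 : ℝ) + α) : ℝ)) : ℂ) • ⟪h j, x⟫_ℂ • h j)
    (B : H →L[ℂ] H)
    (hBB : (((a ^ 2 : ℝ) : ℂ) • Cpow - B * ContinuousLinearMap.adjoint B).IsPositive) :
    ‖(Cγinv - Cdag) * B‖ ^ 2 ≤ a ^ 2 * γ ^ (α - 1) := by
  have hCγinv (j : ℕ) : Cγinv (h j) = (((σ j ^ 2 + γ)⁻¹ : ℝ) : ℂ) • h j := by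
    rw [Complex.ofReal_inv]
    refine ContinuousLinearMap.apply_eq_inv_smul_of_mul_eq_one hCγ2
      (Complex.ofReal_ne_zero.2 (by positivity)) ?_
    simp [hC, hOn.tsum_smul_inner_smul_apply, add_smul]
  -- Since `0⁻¹ = 0`, the Moore–Penrose case split disappears on eigenvectors.
  have hCdag (j : ℕ) : Cdag (h j) = (((σ j ^ 2)⁻¹ : ℝ) : ℂ) • h j := by
    rw [hCdag, hOn.tsum_smul_inner_smul_apply]
    split_ifs with hσ <;> simp [hσ]
  have hdiff (j : ℕ) : (Cγinv - Cdag) (h j) = (((σ j ^ 2 + γ)⁻¹ - (σ j ^ 2)⁻¹ : ℝ) : ℂ) • h j := by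
    rw [sub_apply, hCγinv, hCdag, ← sub_smul, Complex.ofReal_sub]
  have hquad := hOn.re_inner_adjoint_apply_le hCpow hdiff (Real.rpow_nonneg hγ.le _) fun j =>
    Real.rpow_one_add_mul_inv_add_sub_inv_sq_le (sq_nonneg _) hγ hα.1 (by linarith [hα.2])
  rw [← norm_star, star_mul]
  refine ContinuousLinearMap.norm_sq_le_of_forall_norm_apply_sq_le _ (by positivity) fun x => ?_
  calc ‖B.adjoint ((Cγinv - Cdag).adjoint x)‖ ^ 2
      ≤ a ^ 2 * RCLike.re ⟪(Cγinv - Cdag).adjoint x, Cpow ((Cγinv - Cdag).adjoint x)⟫_ℂ :=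
        ContinuousLinearMap.norm_adjoint_apply_sq_le hBB _
    _ ≤ a ^ 2 * (γ ^ (α - 1) * ‖x‖ ^ 2) := by gcongr; exact hquad x
    _ = a ^ 2 * γ ^ (α - 1) * ‖x‖ ^ 2 := by ring

theorem pseudoinverse_bias_bound
    {H : Type*} [NormedAddCommGroup H] [InnerProductSpace ℂ H] [CompleteSpace H]
    (h : ℕ → H) (hOn : Orthonormal ℂ h)
    (σ : ℕ → ℝ) (hσ : ∀ j, 0 ≤ σ j)
    (C : H →L[ℂ] H)
    (hC : ∀ x : H, C x = ∑' j : ℕ, (((σ j) ^ 2 : ℝ) : ℂ) • ⟪h j, x⟫_ℂ • h j)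
    (γ : ℝ) (hγ : 0 < γ)
    (Cγinv : H →L[ℂ] H)
    (hCγ1 : (C + (γ : ℂ) • (1 : H →L[ℂ] H)) * Cγinv = 1)
    (hCγ2 : Cγinv * (C + (γ : ℂ) • (1 : H →L[ℂ] H)) = 1)
    (Cdag : H →L[ℂ] H)
    (hCdag : ∀ x : H, Cdag x =
      ∑' j : ℕ, (if σ j = 0 then (0 : ℂ) else ((((σ j) ^ 2)⁻¹ : ℝ) : ℂ)) • ⟪h j, x⟫_ℂ • h j)
    (a α : ℝ) (ha : 0 < a) (hα : α ∈ Set.Icc (1 : ℝ) 2)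
    (Cpow : H →L[ℂ] H)
    (hCpow : ∀ x : H, Cpow x =
      ∑' j : ℕ, (((((σ j) ^ 2) ^ ((1 : ℝ) + α) : ℝ)) : ℂ) • ⟪h j, x⟫_ℂ • h j)
    (B : H →L[ℂ] H)
    (hBB : (((a ^ 2 : ℝ) : ℂ) • Cpow - B * ContinuousLinearMap.adjoint B).IsPositive) :
    ‖(Cγinv - Cdag) * B‖ ^ 2 ≤ a ^ 2 * γ ^ (α - 1) :=
  pseudoinverse_bias_bound_general h hOn σ C hC γ hγ Cγinv hCγ2 Cdag hCdag a α hα Cpow hCpow B hBB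
end

section
/- Let (σ_j)_{j≥1} be a nonincreasing sequence of nonnegative reals satisfying σ_j² ≤ b j^{-1/β} for some b > 0 and β ∈ (0,1). Then for every γ > 0, Σ_j σ_j²/(σ_j² + γ) ≤ (b^β/(1−β)) γ^{-β}. -/
open Set MeasureTheory intervalIntegral Finset

theorem effective_dimension_bound
    (σ : ℕ → ℝ) (hσnonneg : ∀ j, 0 ≤ σ j)
    (hσanti : Antitone σ)
    (b β : ℝ) (hb : 0 < b) (hβ : β ∈ Set.Ioo (0 : ℝ) 1)
    (hdecay : ∀ j : ℕ, (σ j) ^ 2 ≤ b * ((j : ℝ) + 1) ^ (-(1 / β)))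
    (γ : ℝ) (hγ : 0 < γ) :
    ∑' j : ℕ, (σ j) ^ 2 / ((σ j) ^ 2 + γ) ≤ (b ^ β / (1 - β)) * γ ^ (-β) := by
  obtain ⟨hβ0, hβ1⟩ := hβ
  have hβne : β ≠ 0 := ne_of_gt hβ0
  have h1β : 1 < 1 / β := by rw [lt_div_iff₀ hβ0]; linarith
  have h1mβ : (0:ℝ) < 1 - β := by linarith
  set c : ℝ := b / γ with hc_def
  have hc : 0 < c := div_pos hb hγ
  set A : ℝ := c ^ β with hA_def
  have hA : 0 < A := Real.rpow_pos_of_pos hc β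
  have hApow : A ^ (-(1 / β)) = c⁻¹ := by
    rw [hA_def, ← Real.rpow_mul hc.le]
    have : β * -(1 / β) = -1 := by field_simp
    rw [this, Real.rpow_neg_one]
  have hp_neg : -(1 / β) ≤ 0 := neg_nonpos.mpr (by positivity)
  set h : ℝ → ℝ := fun x => if x ≤ A then 1 else c * x ^ (-(1 / β)) with hh_def
  have h_nonneg : ∀ x, 0 ≤ h x := by
    intro x
    by_cases hx : x ≤ A
    · simp [hh_def, hx]
    · simp only [hh_def, hx, if_false]
      have hx0 : 0 < x := hA.trans (not_le.mp hx)
      positivity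
  have h_anti : Antitone h := by
    intro x y hxy
    by_cases hx : x ≤ A
    · by_cases hy : y ≤ A
      · simp [hh_def, hx, hy]
      · simp only [hh_def, hx, hy, if_true, if_false]
        have hAy : A < y := not_le.mp hy
        calc c * y ^ (-(1 / β)) ≤ c * A ^ (-(1 / β)) :=
              mul_le_mul_of_nonneg_left
                (Real.rpow_le_rpow_of_nonpos hA hAy.le hp_neg) hc.le
          _ = 1 := by rw [hApow, mul_inv_cancel₀ hc.ne']
    · have hy : ¬ y ≤ A := fun hy => hx (hxy.trans hy)
      simp only [hh_def, hx, hy, if_false]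
      have hx0 : 0 < x := hA.trans (not_le.mp hx)
      exact mul_le_mul_of_nonneg_left
        (Real.rpow_le_rpow_of_nonpos hx0 hxy hp_neg) hc.le
  have hterm : ∀ j : ℕ, σ j ^ 2 / (σ j ^ 2 + γ) ≤ h ((j:ℝ) + 1) := by
    intro j
    have hs : 0 ≤ σ j ^ 2 := sq_nonneg _
    have hd : 0 < σ j ^ 2 + γ := by linarith
    by_cases hj : ((j:ℝ) + 1) ≤ A
    · simp only [hh_def, hj, if_true]
      exact (div_le_one hd).mpr (by linarith)
    · simp only [hh_def, hj, if_false]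
      calc σ j ^ 2 / (σ j ^ 2 + γ) ≤ σ j ^ 2 / γ := by
            gcongr
            · linarith
          _ ≤ (b * ((j:ℝ) + 1) ^ (-(1 / β))) / γ := by
            gcongr
            exact hdecay j
          _ = c * ((j:ℝ) + 1) ^ (-(1 / β)) := by rw [hc_def]; ring
  apply Real.tsum_le_of_sum_range_le
    (fun j => div_nonneg (sq_nonneg _) (by positivity))
  intro n
  set m : ℕ := n + ⌈A⌉₊ with hm_def
  have hmA : A ≤ (m:ℝ) := le_trans (Nat.le_ceil A)
    (by exact_mod_cast Nat.le_add_left _ n)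
  have hm0 : (0:ℝ) ≤ (m:ℝ) := hA.le.trans hmA
  have hint1 : IntervalIntegrable h volume 0 A :=
    (h_anti.antitoneOn _).intervalIntegrable
  have hint2 : IntervalIntegrable h volume A (m:ℝ) :=
    (h_anti.antitoneOn _).intervalIntegrable
  have h0mem : (0:ℝ) ∉ Set.uIcc A (m:ℝ) := by
    rw [uIcc_of_le hmA]
    exact fun hmem => absurd hmem.1 (not_le.mpr hA)
  have hintr : IntervalIntegrable (fun x => c * x ^ (-(1 / β))) volume A (m:ℝ) :=
    (intervalIntegrable_rpow (Or.inr h0mem)).const_mul c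
  have hI1 : ∫ x in (0:ℝ)..A, h x = A := by
    have heq : EqOn h (fun _ => (1:ℝ)) (Set.uIcc (0:ℝ) A) := by
      rw [uIcc_of_le hA.le]
      intro x hx
      simp [hh_def, hx.2]
    rw [intervalIntegral.integral_congr heq]
    simp
  have hI2 : ∫ x in A..(m:ℝ), h x ≤ A * β / (1 - β) := by
    have hmono : ∫ x in A..(m:ℝ), h x ≤ ∫ x in A..(m:ℝ), c * x ^ (-(1 / β)) := by
      apply intervalIntegral.integral_mono_on hmA hint2 hintr
      intro x hx
      by_cases hxA : x ≤ A
      · have hxe : x = A := le_antisymm hxA hx.1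
        rw [hxe]
        simp only [hh_def, le_refl, if_true]
        rw [hApow, mul_inv_cancel₀ hc.ne']
      · simp [hh_def, hxA]
    have hne : -(1 / β) ≠ -1 := by
      intro hcon
      have : (1:ℝ) / β = 1 := by linarith [neg_injective hcon]
      linarith
    have hcalc : ∫ x in A..(m:ℝ), c * x ^ (-(1 / β))
        = c * (((m:ℝ) ^ (-(1 / β) + 1) - A ^ (-(1 / β) + 1)) / (-(1 / β) + 1)) := by
      rw [intervalIntegral.integral_const_mul, integral_rpow (Or.inr ⟨hne, h0mem⟩)]
    have hAq : A ^ (-(1 / β) + 1) = c⁻¹ * A := by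
      rw [Real.rpow_add hA, hApow, Real.rpow_one]
    have hq' : -(1 / β) + 1 = (β - 1) / β := by field_simp; ring
    have hX : 0 ≤ (m:ℝ) ^ (-(1 / β) + 1) := Real.rpow_nonneg hm0 _
    refine le_trans (le_trans hmono (le_of_eq hcalc)) ?_
    rw [hAq, hq']
    set X := (m:ℝ) ^ ((β - 1) / β) with hX_def
    have hX0 : 0 ≤ X := by rw [hX_def, ← hq']; exact hX
    have hβm1 : β - 1 ≠ 0 := by linarith
    have h1mβne : (1:ℝ) - β ≠ 0 := h1mβ.ne'
    have heq2 : c * ((X - c⁻¹ * A) / ((β - 1) / β)) = (A - c * X) * β / (1 - β) := by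
      field_simp [hc.ne', hβm1, h1mβne]
      ring
    rw [heq2]
    have hnum : (A - c * X) * β ≤ A * β := by
      have : 0 ≤ c * X := mul_nonneg hc.le hX0
      nlinarith
    exact div_le_div_of_nonneg_right hnum h1mβ.le
  have hsum2 : ∑ i ∈ Finset.range m, h ((i:ℝ) + 1) ≤ ∫ x in (0:ℝ)..(m:ℝ), h x := by
    have := AntitoneOn.sum_le_integral (f := h) (x₀ := 0) (a := m) (h_anti.antitoneOn _)
    simpa using this
  have hIm : ∫ x in (0:ℝ)..(m:ℝ), h x ≤ A + A * β / (1 - β) := by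
    rw [← intervalIntegral.integral_add_adjacent_intervals hint1 hint2, hI1]
    linarith
  have hsum1 : ∑ i ∈ Finset.range n, σ i ^ 2 / (σ i ^ 2 + γ)
      ≤ ∑ i ∈ Finset.range m, h ((i:ℝ) + 1) := by
    calc ∑ i ∈ Finset.range n, σ i ^ 2 / (σ i ^ 2 + γ)
        ≤ ∑ i ∈ Finset.range n, h ((i:ℝ) + 1) :=
          Finset.sum_le_sum fun i _ => hterm i
      _ ≤ ∑ i ∈ Finset.range m, h ((i:ℝ) + 1) :=
          Finset.sum_le_sum_of_subset_of_nonneg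
            (Finset.range_subset_range.mpr (Nat.le_add_right n _))
            (fun i _ _ => h_nonneg _)
  have hfinal : A + A * β / (1 - β) = b ^ β / (1 - β) * γ ^ (-β) := by
    rw [hA_def, hc_def, Real.div_rpow hb.le hγ.le, Real.rpow_neg hγ.le]
    field_simp
    ring
  linarith
end
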